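/- Let p be an odd prime and n a natural number. For each non-negative integer l: if p^{2l} exactly divides n, then A(p^{2l+1}; n) = p^{−l−1} χ_p(−n/p^{2l}); otherwise A(p^{2l+1}; n) = 0. -/

import Mathlib

open Finset

/-- `e z = exp(2 π i z)`. -/
noncomputable def e (z : ℝ) : ℂ := Complex.exp (2 * Real.pi * Complex.I * z)

/-- The quadratic Gauss sum `S(q,a) = ∑_{r=1}^{q} e(a r² / q)`. -/
noncomputable def S (q : ℕ) (a : ℤ) : ℂ :=
  ∑ r ∈ Finset.Icc 1 q, e ((a : ℝ) * (r : ℝ) ^ 2 / (q : ℝ))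

/-- `A(q;n) = ∑_{1 ≤ a ≤ q, gcd(a,q)=1} q⁻³ S(q,a)³ e(-n a / q)`. -/
noncomputable def A (q n : ℕ) : ℂ :=
  ∑ a ∈ (Finset.Icc 1 q).filter (fun a => Nat.gcd a q = 1),
    (q : ℂ) ^ (-(3 : ℤ)) * S q (a : ℤ) ^ 3 * e (-((n : ℝ) * (a : ℝ) / (q : ℝ)))

/-! For `p ∤ a`, splitting `r = y + p^(l+1) z` in `S(p^(2l+1), a)` and summing over `z` first
gives `S(p^(2l+1), a) = p^l S(p, a) = p^l χ(a) τ`, where `χ` is the Legendre character and `τ`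
its Gauss sum. As `χ³ = χ` and `χ(a) = 0` for `p ∣ a`, `A(p^(2l+1); n)` is `p^(-3l-3) τ³` times
the twisted sum `∑_{a mod p^(2l+1)} χ(a) e(-na/p^(2l+1))`; splitting `a = b + p t` reduces this to
`p^(2l) χ(-n/p^(2l)) τ` when `p^(2l) ∣ n` and to `0` otherwise. Finally `τ⁴ = (χ(-1) p)² = p²`,
and `χ(-n/p^(2l))` vanishes when `p^(2l+1) ∣ n`. -/

open AddChar

noncomputable def eFrac (c : ℤ) (k : ℕ) : ℂ := e (c / k)

lemma e_add (x y : ℝ) : e (x + y) = e x * e y := by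
  simp only [e, Complex.ofReal_add, mul_add, Complex.exp_add]

lemma eFrac_add (c d : ℤ) (k : ℕ) : eFrac (c + d) k = eFrac c k * eFrac d k := by
  rw [eFrac, eFrac, eFrac, ← e_add, Int.cast_add, add_div]

lemma eFrac_eq_stdAddChar (c : ℤ) (k : ℕ) [NeZero k] :
    eFrac c k = ZMod.stdAddChar (c : ZMod k) := by
  rw [ZMod.stdAddChar_coe, eFrac, e]
  push_cast
  ring_nf

lemma eFrac_mul_self (c : ℤ) (k : ℕ) : eFrac (c * k) k = 1 := by
  rcases k.eq_zero_or_pos with rfl | hk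
  · simp [eFrac, e]
  · have := NeZero.of_pos hk
    simp [eFrac_eq_stdAddChar]

lemma eFrac_mul_mul {m : ℕ} (hm : m ≠ 0) (c : ℤ) (k : ℕ) :
    eFrac (m * c) (m * k) = eFrac c k := by
  rw [eFrac, eFrac]
  push_cast
  rw [mul_div_mul_left _ _ (by exact_mod_cast hm)]

lemma sum_range_natCast_zmod {M : Type*} [AddCommMonoid M] (N : ℕ) [NeZero N] (f : ZMod N → M) :
    ∑ i ∈ range N, f i = ∑ x, f x :=
  sum_nbij' (↑) ZMod.val (fun _ _ ↦ mem_univ _) (fun x _ ↦ mem_range.2 x.val_lt)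
    (fun _ hi ↦ ZMod.val_natCast_of_lt (mem_range.1 hi)) (fun x _ ↦ ZMod.natCast_zmod_val x)
    (fun _ _ ↦ rfl)

lemma sum_range_eFrac_mul {k : ℕ} (hk : 0 < k) (c : ℤ) :
    ∑ z ∈ range k, eFrac (c * z) k = if (k : ℤ) ∣ c then (k : ℂ) else 0 := by
  have := NeZero.of_pos hk
  simp_rw [eFrac_eq_stdAddChar, Int.cast_mul, Int.cast_natCast]
  rw [sum_range_natCast_zmod k (fun x ↦ ZMod.stdAddChar ((c : ZMod k) * x))]
  simp_rw [mul_comm (c : ZMod k)]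
  simp [sum_mulShift _ (ZMod.isPrimitive_stdAddChar k), ZMod.intCast_zmod_eq_zero_iff_dvd]

lemma sum_range_mul_eq_sum_sum {M : Type*} [AddCommMonoid M] (m k : ℕ) (f : ℕ → M) :
    ∑ x ∈ range (m * k), f x = ∑ z ∈ range k, ∑ y ∈ range m, f (y + m * z) := by
  induction k with
  | zero => simp
  | succ k ih =>
    rw [Nat.mul_succ, sum_range_add, ih, sum_range_succ]
    simp_rw [add_comm]

lemma sum_range_mul_ite_dvd {M : Type*} [AddCommMonoid M] {m : ℕ} (hm : 0 < m) (k : ℕ)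
    (f : ℕ → M) :
    ∑ y ∈ range (m * k), (if m ∣ y then f y else 0) = ∑ w ∈ range k, f (m * w) := by
  rw [sum_range_mul_eq_sum_sum]
  refine sum_congr rfl fun w _ ↦ ?_
  rw [sum_eq_single_of_mem 0 (mem_range.2 hm) fun u hu hu0 ↦ ?_]
  · simp
  · refine if_neg ?_
    rw [Nat.dvd_add_left (dvd_mul_right m w)]
    exact Nat.not_dvd_of_pos_of_lt (Nat.pos_of_ne_zero hu0) (mem_range.1 hu)

lemma Icc_filter_coprime_eq_range_filter {q : ℕ} (hq : q ≠ 1) :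
    (Icc 1 q).filter (fun a ↦ Nat.gcd a q = 1) = (range q).filter (fun a ↦ Nat.gcd a q = 1) := by
  ext a
  simp only [mem_filter, mem_Icc, mem_range]
  constructor
  · rintro ⟨⟨-, haq⟩, hcop⟩
    refine ⟨haq.lt_of_ne ?_, hcop⟩
    rintro rfl
    exact hq (by rwa [Nat.gcd_self] at hcop)
  · rintro ⟨haq, hcop⟩
    refine ⟨⟨Nat.pos_of_ne_zero ?_, haq.le⟩, hcop⟩
    rintro rfl
    exact hq (by rwa [Nat.gcd_zero_left] at hcop)

lemma sum_Icc_one_eq_sum_range {M : Type*} [AddCommMonoid M] {f : ℕ → M} (q : ℕ)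
    (h : f q = f 0) : ∑ r ∈ Icc 1 q, f r = ∑ r ∈ range q, f r := by
  rw [← Ico_add_one_right_eq_Icc, ← zero_add 1, ← sum_Ico_add', ← range_eq_Ico]
  rcases q with _ | q
  · rfl
  rw [sum_range_succ, sum_range_succ', h]

lemma S_eq_sum_range (q : ℕ) (a : ℤ) : S q a = ∑ r ∈ range q, eFrac (a * r ^ 2) q := by
  rw [S, ← sum_Icc_one_eq_sum_range q]
  · refine sum_congr rfl fun r _ ↦ ?_
    rw [eFrac]
    push_cast
    ring_nf
  · simp only [Nat.cast_zero, zero_pow two_ne_zero, mul_zero]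
    rw [show a * (q : ℤ) ^ 2 = a * q * q by ring, eFrac_mul_self]
    simp [eFrac, e]

lemma sum_range_eFrac_sq_shift {p : ℕ} (hp : 0 < p) {a : ℤ} (ha : IsCoprime (p : ℤ) (2 * a))
    (l y : ℕ) :
    ∑ z ∈ range (p ^ l), eFrac (a * ((y + p ^ (l + 1) * z : ℕ) : ℤ) ^ 2) (p ^ (l + 1) * p ^ l)
      = if p ^ l ∣ y then p ^ l * eFrac (a * y ^ 2) (p ^ (2 * l + 1)) else 0 := by
  have hsplit : ∀ z : ℕ, eFrac (a * ((y + p ^ (l + 1) * z : ℕ) : ℤ) ^ 2) (p ^ (l + 1) * p ^ l)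
      = eFrac (a * y ^ 2) (p ^ (2 * l + 1)) * eFrac (2 * a * y * z) (p ^ l) := by
    intro z
    have hexpand : a * ((y + p ^ (l + 1) * z : ℕ) : ℤ) ^ 2 = a * y ^ 2
        + ((p ^ (l + 1) : ℕ) * (2 * a * y * z) + p * a * z ^ 2 * (p ^ (l + 1) * p ^ l : ℕ)) := by
      push_cast; ring
    rw [hexpand, eFrac_add, eFrac_add, eFrac_mul_mul (by positivity), eFrac_mul_self, mul_one,
      ← pow_add, show l + 1 + l = 2 * l + 1 by ring]
  have hdvd : ((p ^ l : ℕ) : ℤ) ∣ 2 * a * y ↔ p ^ l ∣ y := by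
    rw [← Int.natCast_dvd_natCast]
    push_cast
    exact ⟨ha.pow_left.dvd_of_dvd_mul_left, fun h ↦ h.mul_left _⟩
  simp_rw [hsplit, ← mul_sum, sum_range_eFrac_mul (pow_pos hp l), hdvd]
  split_ifs <;> push_cast <;> ring

lemma S_pow_two_mul_add_one {p : ℕ} {a : ℤ} (ha : IsCoprime (p : ℤ) (2 * a)) (l : ℕ) :
    S (p ^ (2 * l + 1)) a = p ^ l * S p a := by
  rcases p.eq_zero_or_pos with rfl | hp
  · simp [S]
  rw [S_eq_sum_range, S_eq_sum_range, show 2 * l + 1 = (l + 1) + l by ring, pow_add,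
    sum_range_mul_eq_sum_sum, sum_comm]
  simp_rw [sum_range_eFrac_sq_shift hp ha l]
  rw [pow_succ, sum_range_mul_ite_dvd (pow_pos hp l), mul_sum]
  refine sum_congr rfl fun w _ ↦ ?_
  rw [show a * ((p ^ l * w : ℕ) : ℤ) ^ 2 = ((p ^ (2 * l) : ℕ) : ℤ) * (a * w ^ 2) by push_cast; ring,
    pow_succ p (2 * l), eFrac_mul_mul (by positivity)]

lemma gaussSum_mulShift_of_isQuadratic {F R : Type*} [Field F] [Fintype F] [CommRing R]
    [IsDomain R] {χ : MulChar F R} (hχ₁ : χ ≠ 1) (hχ₂ : χ.IsQuadratic) (ψ : AddChar F R) (b : F) :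
    gaussSum χ (mulShift ψ b) = χ b * gaussSum χ ψ := by
  rcases eq_or_ne b 0 with rfl | hb
  · simpa [gaussSum, MulChar.map_zero] using MulChar.sum_eq_zero_of_ne_one hχ₁
  · simpa [hχ₂.inv] using gaussSum_mulShift_eq χ ψ (Units.mk0 b hb)

lemma sum_addChar_mul_sq {F R : Type*} [Field F] [Fintype F] [DecidableEq F] [CommRing R]
    [IsDomain R] [CharZero R] (hF : ringChar F ≠ 2) {ψ : AddChar F R} (hψ : ψ.IsPrimitive) {a : F}
    (ha : a ≠ 0) :
    ∑ x, ψ (a * x ^ 2) = quadraticChar F a *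
      gaussSum ((quadraticChar F).ringHomComp (Int.castRingHom R)) ψ := by
  set χ := (quadraticChar F).ringHomComp (Int.castRingHom R)
  have hcard (t : F) : (#{x | x ^ 2 = t} : R) = χ t + 1 := by
    have := congrArg (Int.cast : ℤ → R) (quadraticChar_card_sqrts hF t)
    rw [Set.toFinset_ofPred] at this
    push_cast at this
    exact this
  calc ∑ x, ψ (a * x ^ 2)
      = ∑ t, #{x | x ^ 2 = t} • ψ (a * t) := by
        rw [← sum_fiberwise' univ (· ^ 2) (fun t ↦ ψ (a * t))]
        simp only [sum_const]
    _ = gaussSum χ (mulShift ψ a) + ∑ t, ψ (t * a) := by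
        simp only [nsmul_eq_mul, hcard, add_mul, one_mul, sum_add_distrib, gaussSum,
          mulShift_apply, mul_comm _ a]
    _ = χ a * gaussSum χ ψ := by
        rw [gaussSum_mulShift_of_isQuadratic ((MulChar.ringHomComp_ne_one_iff Int.cast_injective).2
          (quadraticChar_ne_one hF)) ((quadraticChar_isQuadratic F).comp _),
          sum_mulShift a hψ, if_neg ha, Nat.cast_zero, add_zero]

section Legendre

variable {p : ℕ} [Fact p.Prime]

variable (p) in
noncomputable def legendreChar : MulChar (ZMod p) ℂ :=
  (quadraticChar (ZMod p)).ringHomComp (Int.castRingHom ℂ)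

local notation "τ" => gaussSum (legendreChar p) ZMod.stdAddChar

lemma legendreChar_intCast (a : ℤ) : legendreChar p a = legendreSym p a := rfl

lemma isQuadratic_legendreChar : (legendreChar p).IsQuadratic :=
  (quadraticChar_isQuadratic _).comp _

lemma ringChar_zmod_ne_two (hp2 : p ≠ 2) : ringChar (ZMod p) ≠ 2 := by
  rwa [ZMod.ringChar_zmod_n]

lemma legendreChar_ne_one (hp2 : p ≠ 2) : legendreChar p ≠ 1 :=
  (MulChar.ringHomComp_ne_one_iff Int.cast_injective).2
    (quadraticChar_ne_one (ringChar_zmod_ne_two hp2))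

lemma legendreChar_pow_three (x : ZMod p) : legendreChar p x ^ 3 = legendreChar p x := by
  rw [← MulChar.pow_apply' _ three_ne_zero, isQuadratic_legendreChar.pow_odd (by decide)]

lemma gaussSum_legendreChar_pow_four (hp2 : p ≠ 2) :
    τ ^ 4 = (p : ℂ) ^ 2 := by
  have hunit : legendreChar p (-1) ^ 2 = 1 := by
    rw [← MulChar.pow_apply' _ two_ne_zero, isQuadratic_legendreChar.sq_eq_one,
      MulChar.one_apply isUnit_one.neg]
  rw [show 4 = 2 * 2 by rfl, pow_mul, gaussSum_sq (χ := legendreChar p) (legendreChar_ne_one hp2)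
    isQuadratic_legendreChar (ZMod.isPrimitive_stdAddChar p), ZMod.card, mul_pow, hunit, one_mul]

lemma S_prime (hp2 : p ≠ 2) {a : ℤ} (ha : ¬ (p : ℤ) ∣ a) :
    S p a = legendreChar p a * τ := by
  simp_rw [S_eq_sum_range, eFrac_eq_stdAddChar, Int.cast_mul, Int.cast_pow, Int.cast_natCast]
  rw [sum_range_natCast_zmod p (fun x ↦ ZMod.stdAddChar ((a : ZMod p) * x ^ 2)),
    sum_addChar_mul_sq (ringChar_zmod_ne_two hp2) (ZMod.isPrimitive_stdAddChar p)
      ((ZMod.intCast_zmod_eq_zero_iff_dvd a p).not.2 ha)]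
  rfl

lemma isCoprime_two_mul_of_not_dvd (hp2 : p ≠ 2) {a : ℤ} (ha : ¬ (p : ℤ) ∣ a) :
    IsCoprime (p : ℤ) (2 * a) := by
  have hp : Prime (p : ℤ) := Nat.prime_iff_prime_int.1 Fact.out
  refine (hp.coprime_iff_not_dvd).2 fun h ↦ (hp.dvd_or_dvd h).elim (fun h2 ↦ hp2 ?_) ha
  exact (Nat.prime_dvd_prime_iff_eq Fact.out Nat.prime_two).1 (by exact_mod_cast h2)

lemma S_prime_pow (hp2 : p ≠ 2) (l : ℕ) {a : ℤ} (ha : ¬ (p : ℤ) ∣ a) :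
    S (p ^ (2 * l + 1)) a = p ^ l * (legendreChar p a * τ) := by
  rw [S_pow_two_mul_add_one (isCoprime_two_mul_of_not_dvd hp2 ha), S_prime hp2 ha]

lemma sum_range_legendreChar_mul_eFrac_prime (hp2 : p ≠ 2) (m : ℤ) :
    ∑ b ∈ range p, legendreChar p b * eFrac (m * b) p
      = legendreChar p m * τ := by
  simp_rw [eFrac_eq_stdAddChar, Int.cast_mul, Int.cast_natCast]
  rw [sum_range_natCast_zmod p (fun x ↦ legendreChar p x * ZMod.stdAddChar ((m : ZMod p) * x)),
    ← gaussSum_mulShift_of_isQuadratic (χ := legendreChar p) (legendreChar_ne_one hp2)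
      isQuadratic_legendreChar]
  rfl

lemma sum_range_legendreChar_mul_eFrac (hp2 : p ≠ 2) {k : ℕ} (hk : 0 < k) (c : ℤ) :
    ∑ a ∈ range (p * k), legendreChar p a * eFrac (c * a) (p * k)
      = if (k : ℤ) ∣ c then
          k * (legendreChar p (c / k : ℤ) * τ)
        else 0 := by
  have hsplit (b z : ℕ) :
      legendreChar p ((b + p * z : ℕ) : ZMod p) * eFrac (c * (b + p * z : ℕ)) (p * k)
        = legendreChar p b * eFrac (c * b) (p * k) * eFrac (c * z) k := by
    rw [show c * (b + p * z : ℕ) = c * b + p * (c * z) by push_cast; ring, eFrac_add,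
      eFrac_mul_mul (Fact.out : p.Prime).ne_zero]
    push_cast
    rw [ZMod.natCast_self, zero_mul, add_zero, mul_assoc]
  rw [sum_range_mul_eq_sum_sum, sum_comm]
  simp_rw [hsplit, ← mul_sum, sum_range_eFrac_mul hk, ← sum_mul]
  split_ifs with hdvd
  · obtain ⟨m, rfl⟩ := hdvd
    have hterm (b : ℕ) : eFrac (k * m * b) (p * k) = eFrac (m * b) p := by
      rw [mul_comm p k, mul_assoc, eFrac_mul_mul hk.ne']
    simp_rw [hterm]
    rw [sum_range_legendreChar_mul_eFrac_prime hp2, Int.mul_ediv_cancel_left _ (by positivity),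
      mul_comm]
  · rw [mul_zero]

lemma A_prime_pow_eq_sum (hp2 : p ≠ 2) (n l : ℕ) :
    A (p ^ (2 * l + 1)) n = ((p ^ (2 * l + 1) : ℕ) : ℂ) ^ (-3 : ℤ) * p ^ (3 * l)
      * τ ^ 3
      * ∑ a ∈ range (p ^ (2 * l + 1)), legendreChar p a * eFrac (-n * a) (p ^ (2 * l + 1)) := by
  have hp := (Fact.out : p.Prime)
  rw [A, Icc_filter_coprime_eq_range_filter (Nat.one_lt_pow (by omega) hp.one_lt).ne',
    sum_filter, mul_sum]
  refine sum_congr rfl fun a _ ↦ ?_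
  have hcop : Nat.gcd a (p ^ (2 * l + 1)) = 1 ↔ ¬ p ∣ a :=
    (Nat.coprime_pow_right_iff (by omega) _ _).trans (Nat.coprime_comm.trans hp.coprime_iff_not_dvd)
  split_ifs with ha
  · rw [S_prime_pow hp2 l (by exact_mod_cast hcop.1 ha), eFrac]
    push_cast
    rw [mul_pow, mul_pow, legendreChar_pow_three, ← pow_mul]
    ring_nf
  · rw [(ZMod.natCast_eq_zero_iff a p).2 (not_not.1 (hcop.not.1 ha)), MulChar.map_zero]
    ring

lemma A_prime_pow (hp2 : p ≠ 2) (n l : ℕ) :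
    A (p ^ (2 * l + 1)) n = if p ^ (2 * l) ∣ n then
      (p : ℂ) ^ (-(l : ℤ) - 1) * legendreSym p (-((n / p ^ (2 * l) : ℕ) : ℤ)) else 0 := by
  have hp := (Fact.out : p.Prime)
  rw [A_prime_pow_eq_sum hp2, pow_succ', sum_range_legendreChar_mul_eFrac hp2 (pow_pos hp.pos _)]
  by_cases hdvd : p ^ (2 * l) ∣ n
  · have hdvd' : ((p ^ (2 * l) : ℕ) : ℤ) ∣ n := Int.natCast_dvd_natCast.2 hdvd
    rw [if_pos (Int.dvd_neg.2 hdvd'), if_pos hdvd, Int.neg_ediv_of_dvd hdvd', ← Int.natCast_div,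
      legendreChar_intCast]
    have hp0 : (p : ℂ) ≠ 0 := Nat.cast_ne_zero.2 hp.ne_zero
    calc _ = ((p : ℂ) ^ (6 * l + 3))⁻¹ * p ^ (5 * l) * τ ^ 4
          * legendreSym p (-((n / p ^ (2 * l) : ℕ) : ℤ)) := by
          rw [show (-3 : ℤ) = -(3 : ℕ) by rfl, zpow_neg, zpow_natCast]
          push_cast
          ring
      _ = _ := by
          rw [gaussSum_legendreChar_pow_four hp2,
            show -(l : ℤ) - 1 = -(l + 1 : ℕ) by push_cast; ring, zpow_neg, zpow_natCast]
          field_simp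
          ring
  · rw [if_neg (by rwa [Int.dvd_neg, Int.natCast_dvd_natCast]), if_neg hdvd, mul_zero]

end Legendre

theorem A_odd_prime_power (p : ℕ) [Fact p.Prime] (hodd : Odd p) (n : ℕ) (l : ℕ) :
    ((p ^ (2 * l) ∣ n ∧ ¬ p ^ (2 * l + 1) ∣ n) →
      A (p ^ (2 * l + 1)) n =
        (p : ℂ) ^ (-(l : ℤ) - 1) * (legendreSym p (-((n / p ^ (2 * l) : ℕ) : ℤ)) : ℂ)) ∧
    (¬ (p ^ (2 * l) ∣ n ∧ ¬ p ^ (2 * l + 1) ∣ n) → A (p ^ (2 * l + 1)) n = 0) := by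
  have hp2 : p ≠ 2 := by rintro rfl; exact absurd hodd (by decide)
  rw [A_prime_pow hp2]
  refine ⟨fun h ↦ if_pos h.1, fun h ↦ ?_⟩
  split_ifs with hdvd
  · have hdvd' : p ^ (2 * l + 1) ∣ n := not_not.1 fun h' ↦ h ⟨hdvd, h'⟩
    have hpm : p ∣ n / p ^ (2 * l) := Nat.dvd_div_of_mul_dvd (by rwa [← pow_succ])
    rw [(legendreSym.eq_zero_iff p _).2 (by
        rwa [Int.cast_neg, neg_eq_zero, Int.cast_natCast, ZMod.natCast_eq_zero_iff]),
      Int.cast_zero, mul_zero]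
  · rfl
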